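/- Ramanujan's differential equation for the weight-2 Eisenstein series holds as an identity of formal power series: q·(d/dq) G₂(q) = −2·G₂(q)² + (5/6)·G₄(q), where G₂(q) = −1/24 + Σ_{n≥1} σ₁(n) qⁿ and G₄(q) = 1/240 + Σ_{n≥1} σ₃(n) qⁿ. -/

import Mathlib

/-!
Write `G₂ = -1/24 + L` with `L = Σ σ₁(n) qⁿ`; the equation then amounts to Besge's identity
`Σ_{i+j=n} σ₁(i) σ₁(j) = (5 σ₃(n) + (1 - 6n) σ₁(n)) / 12`. Its left side is `Σ a b` over the
representations `n = a x + b y` in positive integers. Split the sum of `a² + a b + b²` over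
these representations once by comparing `a` with `b` and once by comparing `x` with `y`;
exchanging the two products matches the two off-diagonal halves of each split. The bijection
`(a, x, b, y) ↦ (a + b, y, a, x - y)` from `{y < x}` onto `{b < a}` turns `a² + a b + b²` into
`a² + a b + b² - 2 a b`, so everything reduces to the diagonals `a = b` and `x = y`, which are
explicit divisor sums.
-/

open PowerSeries Finset

noncomputable section

/-- The operator `q·d/dq` on formal power series: sends `Σ aₙ qⁿ` to `Σ n·aₙ qⁿ`. -/
def qd (f : PowerSeries ℚ) : PowerSeries ℚ :=
  PowerSeries.mk fun n => (n : ℚ) * PowerSeries.coeff (R := ℚ) n f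

/-- The weight-2 Eisenstein series `G₂(q) = -1/24 + Σ_{n≥1} σ₁(n) qⁿ`. -/
def G2 : PowerSeries ℚ :=
  PowerSeries.mk fun n => if n = 0 then -(1 / 24) else ∑ d ∈ n.divisors, (d : ℚ)

/-- The weight-4 Eisenstein series `G₄(q) = 1/240 + Σ_{n≥1} σ₃(n) qⁿ`. -/
def G4 : PowerSeries ℚ :=
  PowerSeries.mk fun n => if n = 0 then 1 / 240 else ∑ d ∈ n.divisors, (d : ℚ) ^ 3

open ArithmeticFunction
open scoped ArithmeticFunction.sigma

lemma sum_Ico_sq_add_mul_add_sq (d : ℕ) :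
    ∑ a ∈ Ico 1 d, ((a : ℚ) ^ 2 + a * (d - a : ℕ) + ((d - a : ℕ) : ℚ) ^ 2) =
      (5 * d ^ 3 - 6 * d ^ 2 + d) / 6 := by
  have sum_id (m : ℕ) : ∑ a ∈ range m, (a : ℚ) = m * (m - 1) / 2 := by
    induction m with
    | zero => simp
    | succ m ih => rw [sum_range_succ, ih]; push_cast; ring
  have sum_sq (m : ℕ) : ∑ a ∈ range m, (a : ℚ) ^ 2 = m * (m - 1) * (2 * m - 1) / 6 := by
    induction m with
    | zero => simp
    | succ m ih => rw [sum_range_succ, ih]; push_cast; ring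
  rcases Nat.eq_zero_or_pos d with rfl | hd
  · simp
  have hterm : ∀ a ∈ Ico 1 d, (a : ℚ) ^ 2 + a * (d - a : ℕ) + ((d - a : ℕ) : ℚ) ^ 2 =
      (a : ℚ) ^ 2 - d * a + (d : ℚ) ^ 2 := fun a ha => by
    rw [Nat.cast_sub (mem_Ico.mp ha).2.le]; ring
  rw [sum_congr rfl hterm, sum_Ico_eq_sub _ hd]
  simp only [sum_add_distrib, sum_sub_distrib, ← mul_sum, sum_const, card_range,
    nsmul_eq_mul, sum_sq, sum_id]
  push_cast
  ring

theorem Finset.sum_filter_lt_add_sum_filter_gt_add_sum_filter_eq {ι β M : Type*}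
    [LinearOrder β] [AddCommMonoid M] (s : Finset ι) (u v : ι → β) (f : ι → M) :
    ∑ i ∈ s with u i < v i, f i + ∑ i ∈ s with v i < u i, f i + ∑ i ∈ s with u i = v i, f i =
      ∑ i ∈ s, f i := by
  simp only [sum_filter, ← sum_add_distrib]
  refine sum_congr rfl fun i _ => ?_
  rcases lt_trichotomy (u i) (v i) with h | h | h
  · simp [h, h.not_gt, h.ne]
  · simp [h]
  · simp [h, h.not_gt, h.ne']

def mulAddMulReps (n : ℕ) : Finset ((ℕ × ℕ) × (ℕ × ℕ)) :=
  (antidiagonal n).biUnion fun ij => ij.1.divisorsAntidiagonal ×ˢ ij.2.divisorsAntidiagonal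

namespace mulAddMulReps

@[simp]
lemma mem_iff {n a x b y : ℕ} :
    ((a, x), (b, y)) ∈ mulAddMulReps n ↔ a * x + b * y = n ∧ a ≠ 0 ∧ x ≠ 0 ∧ b ≠ 0 ∧ y ≠ 0 := by
  simp only [mulAddMulReps, mem_biUnion, HasAntidiagonal.mem_antidiagonal, mem_product,
    Nat.mem_divisorsAntidiagonal, Prod.exists]
  constructor
  · rintro ⟨_, _, rfl, ⟨rfl, hax⟩, rfl, hby⟩
    rw [mul_ne_zero_iff] at hax hby
    exact ⟨rfl, hax.1, hax.2, hby.1, hby.2⟩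
  · rintro ⟨rfl, ha, hx, hb, hy⟩
    exact ⟨_, _, rfl, ⟨rfl, mul_ne_zero ha hx⟩, rfl, mul_ne_zero hb hy⟩

lemma sum_mul_eq_sum_antidiagonal {R : Type*} [CommSemiring R] (n : ℕ) (f g : ℕ → R) :
    ∑ p ∈ mulAddMulReps n, f p.1.1 * g p.2.1 =
      ∑ ij ∈ antidiagonal n, (∑ d ∈ ij.1.divisors, f d) * ∑ d ∈ ij.2.divisors, g d := by
  rw [mulAddMulReps, sum_biUnion]
  · refine sum_congr rfl fun ij _ => ?_
    rw [← Nat.sum_divisorsAntidiagonal (fun d _ => f d),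
      ← Nat.sum_divisorsAntidiagonal (fun d _ => g d), sum_mul_sum, sum_product]
  · intro ij _ ij' _ hne
    refine disjoint_left.mpr fun p hp hp' => hne ?_
    simp only [mem_product, Nat.mem_divisorsAntidiagonal] at hp hp'
    exact Prod.ext (hp.1.1.symm.trans hp'.1.1) (hp.2.1.symm.trans hp'.2.1)

variable {M : Type*} [AddCommMonoid M]

lemma sum_comp_swap (n : ℕ) (P : (ℕ × ℕ) × (ℕ × ℕ) → Prop) [DecidablePred P]
    (f : (ℕ × ℕ) × (ℕ × ℕ) → M) :
    ∑ p ∈ mulAddMulReps n with P p.swap, f p.swap = ∑ p ∈ mulAddMulReps n with P p, f p :=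
  sum_equiv (Equiv.prodComm _ _) (by rintro ⟨⟨a, x⟩, ⟨b, y⟩⟩; simp [add_comm]; tauto)
    fun _ _ => rfl

lemma sum_filter_snd_lt_snd (n : ℕ) (f : (ℕ × ℕ) × (ℕ × ℕ) → M) :
    ∑ p ∈ mulAddMulReps n with p.2.2 < p.1.2, f p =
      ∑ p ∈ mulAddMulReps n with p.2.1 < p.1.1,
        f ((p.2.1, p.1.2 + p.2.2), (p.1.1 - p.2.1, p.1.2)) := by
  symm
  refine sum_nbij' (fun p => ((p.2.1, p.1.2 + p.2.2), (p.1.1 - p.2.1, p.1.2)))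
    (fun p => ((p.1.1 + p.2.1, p.2.2), (p.1.1, p.1.2 - p.2.2))) ?_ ?_ ?_ ?_ (fun _ _ => rfl) <;>
    rintro ⟨⟨a, x⟩, ⟨b, y⟩⟩ hp <;> simp only [mem_filter, mem_iff] at hp ⊢ <;>
    obtain ⟨⟨he, ha, hx, hb, hy⟩, hlt⟩ := hp
  · refine ⟨⟨?_, hb, by omega, by omega, hx⟩, by omega⟩
    zify [hlt.le] at he ⊢
    linear_combination he
  · refine ⟨⟨?_, by omega, hy, ha, by omega⟩, by omega⟩
    zify [hlt.le] at he ⊢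
    linear_combination he
  all_goals simp only [Prod.mk.injEq, true_and, and_true]; omega

lemma sum_filter_snd_eq_snd (n : ℕ) (f : (ℕ × ℕ) × (ℕ × ℕ) → M) :
    ∑ p ∈ mulAddMulReps n with p.1.2 = p.2.2, f p =
      ∑ d ∈ n.divisors, ∑ a ∈ Ico 1 d, f ((a, n / d), (d - a, n / d)) := by
  rw [← sum_sigma n.divisors (fun d => Ico 1 d)
    fun q => f ((q.2, n / q.1), (q.1 - q.2, n / q.1))]
  symm
  refine sum_nbij' (fun q => ((q.2, n / q.1), (q.1 - q.2, n / q.1)))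
    (fun p => ⟨p.1.1 + p.2.1, p.1.1⟩) ?_ ?_ ?_ ?_ (fun _ _ => rfl)
  · rintro ⟨d, a⟩ hq
    simp only [mem_sigma, Nat.mem_divisors, mem_Ico] at hq
    obtain ⟨⟨hdn, hn⟩, ha, had⟩ := hq
    have hnd : n / d ≠ 0 :=
      (Nat.div_pos (Nat.le_of_dvd (Nat.pos_of_ne_zero hn) hdn) (by omega)).ne'
    simp only [mem_filter, mem_iff]
    refine ⟨⟨?_, by omega, hnd, by omega, hnd⟩, trivial⟩
    rw [← add_mul, Nat.add_sub_cancel' had.le, Nat.mul_div_cancel' hdn]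
  · rintro ⟨⟨a, x⟩, ⟨b, y⟩⟩ hp
    simp only [mem_filter, mem_iff] at hp
    obtain ⟨⟨he, ha, hx, hb, -⟩, rfl⟩ := hp
    have hax : a * x ≠ 0 := mul_ne_zero ha hx
    simp only [mem_sigma, Nat.mem_divisors, mem_Ico]
    exact ⟨⟨⟨x, by rw [← he, add_mul]⟩, by omega⟩, by omega, by omega⟩
  · rintro ⟨d, a⟩ hq
    simp only [mem_sigma, mem_Ico] at hq
    simp only [Nat.add_sub_cancel' hq.2.2.le]
  · rintro ⟨⟨a, x⟩, ⟨b, y⟩⟩ hp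
    simp only [mem_filter, mem_iff] at hp
    obtain ⟨⟨he, ha, -, hb, -⟩, rfl⟩ := hp
    have hx : n / (a + b) = x := by rw [← he, ← add_mul, Nat.mul_div_cancel_left _ (by omega)]
    simp only [hx, Nat.add_sub_cancel_left]

lemma sum_filter_fst_eq_fst (n : ℕ) (f : (ℕ × ℕ) × (ℕ × ℕ) → M) :
    ∑ p ∈ mulAddMulReps n with p.1.1 = p.2.1, f p =
      ∑ d ∈ n.divisors, ∑ x ∈ Ico 1 d, f ((n / d, x), (n / d, d - x)) := by
  refine Eq.trans ?_ (sum_filter_snd_eq_snd n fun p => f ((p.1.2, p.1.1), (p.2.2, p.2.1)))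
  exact sum_equiv ((Equiv.prodComm _ _).prodCongr (Equiv.prodComm _ _))
    (by rintro ⟨⟨a, x⟩, ⟨b, y⟩⟩; simp [mul_comm]; tauto) (fun _ _ => rfl)

lemma sum_eq_two_nsmul_sum_filter_lt_add_sum_filter_eq {β : Type*} [LinearOrder β] (n : ℕ)
    (u : ℕ × ℕ → β)
    (f : (ℕ × ℕ) × (ℕ × ℕ) → M) (hf : ∀ p, f p.swap = f p) :
    ∑ p ∈ mulAddMulReps n, f p =
      2 • ∑ p ∈ mulAddMulReps n with u p.2 < u p.1, f p +
        ∑ p ∈ mulAddMulReps n with u p.1 = u p.2, f p := by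
  have hsymm := sum_comp_swap n (fun p => u p.2 < u p.1) f
  simp only [Prod.fst_swap, Prod.snd_swap, hf] at hsymm
  rw [two_nsmul, ← sum_filter_lt_add_sum_filter_gt_add_sum_filter_eq _ (fun p => u p.1)
    (fun p => u p.2), hsymm]

lemma sum_filter_fst_eq_fst_of_eq_mul_sq (n : ℕ) (c : ℚ)
    (f : (ℕ × ℕ) × (ℕ × ℕ) → ℚ) (hf : ∀ p, p.1.1 = p.2.1 → f p = c * p.1.1 ^ 2) :
    ∑ p ∈ mulAddMulReps n with p.1.1 = p.2.1, f p =
      c * ∑ d ∈ n.divisors, ((n : ℚ) * d - d ^ 2) := by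
  rw [sum_filter_fst_eq_fst, mul_sum,
    ← Nat.sum_div_divisors n fun d => c * ((n : ℚ) * d - d ^ 2)]
  refine sum_congr rfl fun d hd => ?_
  have hnd : (d : ℚ) * (n / d : ℕ) = n := by
    exact_mod_cast Nat.mul_div_cancel' (Nat.dvd_of_mem_divisors hd)
  rw [sum_congr rfl fun x _ => hf _ rfl]
  simp only [sum_const, Nat.card_Ico, nsmul_eq_mul, Nat.cast_sub (Nat.pos_of_mem_divisors hd)]
  linear_combination c * (n / d : ℕ) * hnd

end mulAddMulReps

open mulAddMulReps in
theorem sum_antidiagonal_sigma_one_mul_sigma_one (n : ℕ) :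
    ∑ ij ∈ antidiagonal n, (σ 1 ij.1 : ℚ) * σ 1 ij.2 =
      (5 * σ 3 n + (1 - 6 * n) * σ 1 n) / 12 := by
  let S : (ℕ × ℕ) × (ℕ × ℕ) → ℚ := fun p => p.1.1 * p.2.1
  let H : (ℕ × ℕ) × (ℕ × ℕ) → ℚ := fun p =>
    (p.1.1 : ℚ) ^ 2 + p.1.1 * p.2.1 + (p.2.1 : ℚ) ^ 2
  have hH_swap (p : (ℕ × ℕ) × (ℕ × ℕ)) : H p.swap = H p := by
    simp only [H, Prod.fst_swap, Prod.snd_swap]; ring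
  have hconv : ∑ ij ∈ antidiagonal n, (σ 1 ij.1 : ℚ) * σ 1 ij.2 =
      ∑ p ∈ mulAddMulReps n, S p := by
    simp only [sigma_one_apply, Nat.cast_sum]
    exact (sum_mul_eq_sum_antidiagonal n _ _).symm
  have hS := sum_eq_two_nsmul_sum_filter_lt_add_sum_filter_eq n Prod.fst S fun _ => mul_comm _ _
  have hH_fst := sum_eq_two_nsmul_sum_filter_lt_add_sum_filter_eq n Prod.fst H hH_swap
  have hH_snd := sum_eq_two_nsmul_sum_filter_lt_add_sum_filter_eq n Prod.snd H hH_swap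
  have hH_lt_snd : ∑ p ∈ mulAddMulReps n with p.2.2 < p.1.2, H p =
      ∑ p ∈ mulAddMulReps n with p.2.1 < p.1.1, H p -
        2 * ∑ p ∈ mulAddMulReps n with p.2.1 < p.1.1, S p := by
    rw [sum_filter_snd_lt_snd, mul_sum, ← sum_sub_distrib]
    refine sum_congr rfl fun p hp => ?_
    simp only [H, S, Nat.cast_sub (mem_filter.mp hp).2.le]
    ring
  have hH_diag_snd : ∑ p ∈ mulAddMulReps n with p.1.2 = p.2.2, H p =
      ∑ d ∈ n.divisors, (5 * (d : ℚ) ^ 3 - 6 * d ^ 2 + d) / 6 := by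
    simp only [sum_filter_snd_eq_snd, H, sum_Ico_sq_add_mul_add_sq]
  have hS_diag_fst := sum_filter_fst_eq_fst_of_eq_mul_sq n 1 S fun p h => by simp only [S, h]; ring
  have hH_diag_fst := sum_filter_fst_eq_fst_of_eq_mul_sq n 3 H fun p h => by simp only [H, h]; ring
  rw [hconv, sigma_apply, sigma_one_apply]
  simp only [Nat.cast_sum, Nat.cast_pow]
  simp only [two_nsmul] at hS hH_fst hH_snd
  simp only [sum_sub_distrib, sum_add_distrib, ← mul_sum, ← sum_div]
    at hS_diag_fst hH_diag_fst hH_diag_snd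
  linear_combination hS + hH_lt_snd - (hH_fst - hH_snd) / 2 + hS_diag_fst - hH_diag_fst / 2 +
    hH_diag_snd / 2

def sigmaSeries (k : ℕ) : PowerSeries ℚ :=
  mk fun n => (σ k n : ℚ)

lemma G2_eq : G2 = C (-(1 / 24)) + sigmaSeries 1 := by
  ext n
  rcases n with _ | n <;> simp [G2, sigmaSeries, sigma_one_apply]

lemma G4_eq : G4 = C (1 / 240) + sigmaSeries 3 := by
  ext n
  rcases n with _ | n <;> simp [G4, sigmaSeries, sigma_apply]

lemma qd_C_add (c : ℚ) (f : PowerSeries ℚ) : qd (C c + f) = qd f := by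
  ext n
  rcases n with _ | n <;> simp [qd, coeff_C]

lemma coeff_sigmaSeries_one_sq (n : ℕ) :
    coeff n (sigmaSeries 1 ^ 2) = (5 * (σ 3 n : ℚ) + (1 - 6 * (n : ℚ)) * σ 1 n) / 12 := by
  simp only [sq, coeff_mul, sigmaSeries, coeff_mk]
  exact sum_antidiagonal_sigma_one_mul_sigma_one n

/-- Ramanujan's differential equation: `q·d/dq G₂ = -2·G₂² + (5/6)·G₄` as formal power series. -/
theorem ramanujan_G2 : qd G2 = -2 * G2 ^ 2 + PowerSeries.C (R := ℚ) (5 / 6) * G4 := by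
  rw [G2_eq, G4_eq, qd_C_add,
    show (-2 : PowerSeries ℚ) = C (-2) by rw [map_neg, map_ofNat]]
  ext n
  have h := coeff_sigmaSeries_one_sq n
  rw [sq] at h
  simp only [sq, mul_add, add_mul, map_add, coeff_C_mul, coeff_mul_C, ← map_mul, coeff_C, h]
  simp only [qd, sigmaSeries, coeff_mk]
  split_ifs <;> ring

end
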